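/- Let k be a positive integer and G a connected graph without k-suppressible vertices. If ola⁺(G) ≤ k, then G has at most 5k+2 vertices and at most 6k+1 edges. -/

import Mathlib

open scoped BigOperators

/-- The length of an edge (as an unordered pair) under a labelling `α`. -/
noncomputable def edgeLen {V : Type*} (α : V → ℕ) : Sym2 V → ℕ :=
  Sym2.lift ⟨fun u v => ((α u : ℤ) - (α v : ℤ)).natAbs,
    fun u v => by simp only []; rw [show (α u:ℤ) - α v = -((α v:ℤ) - α u) by ring, Int.natAbs_neg]⟩

/-- The net cost of a labelling `α` of the graph `G`. -/
noncomputable def netCost {V : Type*} (G : SimpleGraph V) (α : V → ℕ) : ℕ :=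
  ∑ᶠ e ∈ G.edgeSet, (edgeLen α e - 1)

/-- A linear arrangement of `G`, viewed as map to `{1, …, n}`. -/
noncomputable def arr {V : Type*} [Finite V] (α : V ≃ Fin (Nat.card V)) (v : V) : ℕ :=
  (α v : ℕ) + 1

/-- `ola⁺(G)`: minimum net cost of a linear arrangement of `G`. -/
noncomputable def olaPlus {V : Type*} [Finite V] (G : SimpleGraph V) : ℕ :=
  sInf {c : ℕ | ∃ α : V ≃ Fin (Nat.card V), netCost G (arr α) = c}

/-- An edge `s(u,v)` is a `k`-separating bridge of `G` if it is a bridge and both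
connected components of `G − e` have more than `k` vertices. -/
def IsKSepBridge {V : Type*} (G : SimpleGraph V) (k : ℕ) (u v : V) : Prop :=
  G.IsBridge s(u, v) ∧
    k < Nat.card ((G.deleteEdges {s(u, v)}).connectedComponentMk u).supp ∧
    k < Nat.card ((G.deleteEdges {s(u, v)}).connectedComponentMk v).supp

/-- A vertex is `k`-suppressible if it has exactly two, non-adjacent, neighbors and both
incident edges are `k`-separating bridges. -/
def IsKSuppressible {V : Type*} (G : SimpleGraph V) (k : ℕ) (v : V) : Prop :=
  ∃ u₁ u₂ : V, u₁ ≠ u₂ ∧ G.neighborSet v = {u₁, u₂} ∧ ¬ G.Adj u₁ u₂ ∧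
    IsKSepBridge G k v u₁ ∧ IsKSepBridge G k v u₂

noncomputable def elo {V : Type*} (p : V → ℕ) : Sym2 V → ℕ :=
  Sym2.lift ⟨fun u v => min (p u) (p v), fun u v => min_comm _ _⟩

noncomputable def ehi {V : Type*} (p : V → ℕ) : Sym2 V → ℕ :=
  Sym2.lift ⟨fun u v => max (p u) (p v), fun u v => max_comm _ _⟩

@[simp] lemma elo_mk {V : Type*} (p : V → ℕ) (u v : V) : elo p s(u, v) = min (p u) (p v) := rfl
@[simp] lemma ehi_mk {V : Type*} (p : V → ℕ) (u v : V) : ehi p s(u, v) = max (p u) (p v) := rfl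
@[simp] lemma edgeLen_mk {V : Type*} (α : V → ℕ) (u v : V) :
    edgeLen α s(u, v) = ((α u : ℤ) - (α v : ℤ)).natAbs := rfl

lemma walk_invariant {V : Type*} {G' : SimpleGraph V} {Q : V → Prop}
    (h : ∀ a b, G'.Adj a b → Q a → Q b) : ∀ {u w : V}, G'.Walk u w → Q u → Q w
  | _, _, SimpleGraph.Walk.nil, hu => hu
  | _, _, SimpleGraph.Walk.cons ha q, hu => walk_invariant h q (h _ _ ha hu)

lemma reach_invariant {V : Type*} {G' : SimpleGraph V} {Q : V → Prop}
    (h : ∀ a b, G'.Adj a b → Q a → Q b) {u w : V} (hr : G'.Reachable u w) (hu : Q u) : Q w := by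
  obtain ⟨q⟩ := hr
  exact walk_invariant h q hu

lemma walk_decompose {V : Type*} {G : SimpleGraph V} (x y : V) {u w : V}
    (q : G.Walk u w) :
    (G.deleteEdges {s(x, y)}).Reachable u w ∨
      ((G.deleteEdges {s(x, y)}).Reachable u x ∧ (G.deleteEdges {s(x, y)}).Reachable y w) ∨
      ((G.deleteEdges {s(x, y)}).Reachable u y ∧ (G.deleteEdges {s(x, y)}).Reachable x w) := by
  induction q with
  | nil => exact Or.inl (SimpleGraph.Reachable.refl _)
  | @cons u b w ha q ih =>
    by_cases he : s(u, b) = s(x, y)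
    · rw [Sym2.eq_iff] at he
      rcases he with ⟨rfl, rfl⟩ | ⟨rfl, rfl⟩
      · -- u = x, b = y
        rcases ih with h1 | ⟨h2a, h2b⟩ | ⟨_, h3b⟩
        · exact Or.inr (Or.inl ⟨SimpleGraph.Reachable.refl _, h1⟩)
        · exact Or.inl (h2a.symm.trans h2b)
        · exact Or.inl h3b
      · -- u = y, b = x
        rcases ih with h1 | ⟨_, h2b⟩ | ⟨h3a, h3b⟩
        · exact Or.inr (Or.inr ⟨SimpleGraph.Reachable.refl _, h1⟩)
        · exact Or.inl h2b
        · exact Or.inl (h3a.symm.trans h3b)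
    · have hr : (G.deleteEdges {s(x, y)}).Reachable u b :=
        (SimpleGraph.Adj.reachable (by rw [SimpleGraph.deleteEdges_adj]; exact ⟨ha, by simp [he]⟩))
      rcases ih with h1 | ⟨h2a, h2b⟩ | ⟨h3a, h3b⟩
      · exact Or.inl (hr.trans h1)
      · exact Or.inr (Or.inl ⟨hr.trans h2a, h2b⟩)
      · exact Or.inr (Or.inr ⟨hr.trans h3a, h3b⟩)

lemma one_cross {V : Type*} {G : SimpleGraph V} (p : V → ℕ) (hG : G.Connected)
    {i : ℕ} {x v : V} (hpx : p x = i) (hpv : p v = i + 1)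
    (hcr : ∀ a b, G.Adj a b → p a ≤ i → i < p b → s(a, b) = s(x, v)) :
    (∀ w, p w ≤ i → (G.deleteEdges {s(x, v)}).Reachable x w) ∧
      (∀ w, i < p w → (G.deleteEdges {s(x, v)}).Reachable v w) ∧
      ¬ (G.deleteEdges {s(x, v)}).Reachable x v := by
  set G' := G.deleteEdges {s(x, v)} with hG'
  have hadj' : ∀ a b, G'.Adj a b → G.Adj a b ∧ s(a, b) ≠ s(x, v) := by
    intro a b h
    rw [hG', SimpleGraph.deleteEdges_adj] at h
    exact ⟨h.1, by simpa using h.2⟩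
  have hside : ∀ a b, G'.Adj a b → p a ≤ i → p b ≤ i := by
    intro a b h ha
    by_contra hb
    exact (hadj' a b h).2 (hcr a b (hadj' a b h).1 ha (by omega))
  have hside' : ∀ a b, G'.Adj a b → i < p a → i < p b := by
    intro a b h ha
    by_contra hb
    have h2 := hcr b a (hadj' a b h).1.symm (by omega) ha
    exact (hadj' a b h).2 (Sym2.eq_swap.trans h2)
  have hnot : ¬ G'.Reachable x v := by
    intro hr
    have := reach_invariant (Q := fun a => p a ≤ i) hside hr (by omega)
    omega
  refine ⟨?_, ?_, hnot⟩
  · intro w hw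
    obtain ⟨q⟩ := hG.preconnected x w
    rcases walk_decompose x v q with h1 | ⟨_, h2b⟩ | ⟨h3a, _⟩
    · exact h1
    · have := reach_invariant (Q := fun a => i < p a) hside' h2b (by omega)
      omega
    · exact absurd h3a hnot
  · intro w hw
    obtain ⟨q⟩ := hG.preconnected v w
    rcases walk_decompose x v q with h1 | ⟨h2a, h2b⟩ | ⟨_, h3b⟩
    · exact h1
    · exact h2b
    · have := reach_invariant (Q := fun a => p a ≤ i) hside h3b (by omega)
      omega

lemma lt_card_supp {V : Type*} [Finite V] {G' : SimpleGraph V} {v : V} {k : ℕ}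
    (f : Fin (k + 1) → V) (hinj : Function.Injective f) (hr : ∀ j, G'.Reachable v (f j)) :
    k < Nat.card ((G'.connectedComponentMk v).supp) := by
  have hmem : ∀ j, f j ∈ (G'.connectedComponentMk v).supp := by
    intro j
    rw [SimpleGraph.ConnectedComponent.mem_supp_iff]
    exact SimpleGraph.ConnectedComponent.eq.mpr (hr j).symm
  have h2 : Nat.card (Fin (k + 1)) ≤ Nat.card ((G'.connectedComponentMk v).supp) :=
    Nat.card_le_card_of_injective (fun j => ⟨f j, hmem j⟩)
      (fun a b h => hinj (congrArg Subtype.val h))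
  simpa using h2


lemma ksep_symm {V : Type*} (G : SimpleGraph V) (k : ℕ) {a b : V}
    (h : IsKSepBridge G k a b) : IsKSepBridge G k b a := by
  obtain ⟨h1, h2, h3⟩ := h
  have hs : s(b, a) = s(a, b) := Sym2.eq_swap
  unfold IsKSepBridge
  rw [hs]
  exact ⟨h1, h3, h2⟩

lemma sep_bridge_of_gap {V : Type*} [Finite V] {G : SimpleGraph V} {n : ℕ}
    (β : V ≃ Fin n) (hG : G.Connected) {k i : ℕ} (hik : k ≤ i) (hin : i + k + 2 ≤ n)
    {x v : V} (hpx : (β x : ℕ) = i) (hpv : (β v : ℕ) = i + 1) (hadj : G.Adj x v)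
    (hcr : ∀ a b, G.Adj a b → (β a : ℕ) ≤ i → i < (β b : ℕ) → s(a, b) = s(x, v)) :
    IsKSepBridge G k x v := by
  obtain ⟨ha, hb, hc⟩ := one_cross (fun w => (β w : ℕ)) hG hpx hpv hcr
  refine ⟨SimpleGraph.isBridge_iff.mpr hc, ?_, ?_⟩
  · apply lt_card_supp (fun j => β.symm ⟨i - k + (j : ℕ), by omega⟩)
    · intro a b h
      have h2 := β.symm.injective h
      have h3 : i - k + (a : ℕ) = i - k + (b : ℕ) := congrArg Fin.val h2
      exact Fin.ext (by omega)
    · intro j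
      apply ha
      simp only [Equiv.apply_symm_apply]
      omega
  · apply lt_card_supp (fun j => β.symm ⟨i + 1 + (j : ℕ), by omega⟩)
    · intro a b h
      have h2 := β.symm.injective h
      have h3 : i + 1 + (a : ℕ) = i + 1 + (b : ℕ) := congrArg Fin.val h2
      exact Fin.ext (by omega)
    · intro j
      apply hb
      simp only [Equiv.apply_symm_apply]
      omega


set_option maxHeartbeats 1000000 in
theorem key_bound {V : Type*} [Finite V] {n : ℕ} (G : SimpleGraph V) (β : V ≃ Fin n)
    (hG : G.Connected) (k : ℕ) (hk : 1 ≤ k)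
    (hsupp : ∀ v : V, ¬ IsKSuppressible G k v)
    (hcost : netCost G (fun v => (β v : ℕ) + 1) ≤ k) :
    n ≤ 5 * k + 2 ∧ Nat.card G.edgeSet ≤ 6 * k + 1 := by
  classical
  haveI : Nonempty V := hG.nonempty
  set p : V → ℕ := fun w => (β w : ℕ) with hp
  have hp_inj : Function.Injective p := fun a b h => β.injective (Fin.val_injective h)
  have hEfin : G.edgeSet.Finite := Set.toFinite _
  set E : Finset (Sym2 V) := hEfin.toFinset with hEdef
  have hmemE : ∀ e, e ∈ E ↔ e ∈ G.edgeSet := fun e => hEfin.mem_toFinset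
  -- basic per-edge facts
  have hlohi : ∀ e ∈ E, elo p e < ehi p e ∧ ehi p e < n := by
    intro e
    induction e using Sym2.ind with
    | _ a b =>
      intro he
      rw [hmemE] at he
      rw [SimpleGraph.mem_edgeSet] at he
      have hab : a ≠ b := he.ne
      have h0 : p a ≠ p b := fun h => hab (hp_inj h)
      have h1 : p a < n := (β a).isLt
      have h2 : p b < n := (β b).isLt
      simp only [elo_mk, ehi_mk]
      omega
  -- the cost
  have hlen : ∀ e ∈ E, edgeLen (fun v => p v + 1) e = ehi p e - elo p e := by
    intro e
    induction e using Sym2.ind with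
    | _ a b =>
      intro _
      simp only [edgeLen_mk, elo_mk, ehi_mk]
      omega
  have hcost' : ∑ e ∈ E, (ehi p e - elo p e - 1) ≤ k := by
    have h1 : netCost G (fun v => p v + 1) = ∑ e ∈ E, (edgeLen (fun v => p v + 1) e - 1) := by
      rw [netCost, show G.edgeSet = ↑E from (hEfin.coe_toFinset).symm, finsum_mem_coe_finset]
    have h2 : ∑ e ∈ E, (edgeLen (fun v => p v + 1) e - 1) = ∑ e ∈ E, (ehi p e - elo p e - 1) :=
      Finset.sum_congr rfl (fun e he => by rw [hlen e he])
    calc ∑ e ∈ E, (ehi p e - elo p e - 1) = netCost G (fun v => p v + 1) := by rw [h1, h2]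
    _ ≤ k := hcost
  -- connectivity: every gap is crossed
  have hconn_cross : ∀ i, i + 1 < n → ∃ e ∈ E, elo p e ≤ i ∧ i < ehi p e := by
    intro i hi
    by_contra hno
    push_neg at hno
    have hinv : ∀ a b, G.Adj a b → p a ≤ i → p b ≤ i := by
      intro a b hab ha
      by_contra hb
      have hmem : s(a, b) ∈ E := (hmemE _).mpr hab
      have h3 := hno _ hmem
      simp only [elo_mk, ehi_mk] at h3
      omega
    have hreach := hG.preconnected (β.symm ⟨i, by omega⟩) (β.symm ⟨i + 1, hi⟩)
    have h1 : p (β.symm ⟨i, by omega⟩) = i := by simp [hp]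
    have h2 : p (β.symm ⟨i + 1, hi⟩) = i + 1 := by simp [hp]
    have h3 := reach_invariant (Q := fun a => p a ≤ i) hinv hreach h1.le
    omega
  -- unit and long edges
  set U : Finset (Sym2 V) := E.filter (fun e => ehi p e - elo p e = 1) with hU
  set L : Finset (Sym2 V) := E.filter (fun e => ¬ ehi p e - elo p e = 1) with hL
  have hUL : U.card + L.card = E.card := Finset.card_filter_add_card_filter_not _
  have hLsubE : L ⊆ E := Finset.filter_subset _ _
  have hLlong : ∀ e ∈ L, 2 ≤ ehi p e - elo p e := by
    intro e he
    rw [hL, Finset.mem_filter] at he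
    have := hlohi e he.1
    omega
  have hLcost : ∑ e ∈ L, (ehi p e - elo p e - 1) ≤ k :=
    le_trans (Finset.sum_le_sum_of_subset hLsubE) hcost'
  have hLcard : L.card ≤ k := by
    calc L.card = ∑ _e ∈ L, 1 := by simp
    _ ≤ ∑ e ∈ L, (ehi p e - elo p e - 1) :=
        Finset.sum_le_sum (fun e he => by have := hLlong e he; omega)
    _ ≤ k := hLcost
  have hLlen : ∑ e ∈ L, (ehi p e - elo p e) ≤ 2 * k := by
    calc ∑ e ∈ L, (ehi p e - elo p e)
        = ∑ e ∈ L, ((ehi p e - elo p e - 1) + 1) :=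
          Finset.sum_congr rfl (fun e he => by have := hLlong e he; omega)
    _ = (∑ e ∈ L, (ehi p e - elo p e - 1)) + L.card := by
          rw [Finset.sum_add_distrib]; simp
    _ ≤ k + k := add_le_add hLcost hLcard
    _ = 2 * k := by ring
  -- unit edge determination
  have hunit_eq : ∀ e ∈ E, ehi p e - elo p e = 1 →
      ∀ a b : V, p a = elo p e → p b = ehi p e → e = s(a, b) := by
    intro e
    induction e using Sym2.ind with
    | _ c d =>
      intro he hlen1 a b hpa hpb
      have hne := (hlohi _ he).1
      simp only [elo_mk, ehi_mk] at hpa hpb hlen1 hne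
      rcases le_total (p c) (p d) with h | h
      · have h1 : c = a := hp_inj (by omega)
        have h2 : d = b := hp_inj (by omega)
        rw [h1, h2]
      · have h1 : c = b := hp_inj (by omega)
        have h2 : d = a := hp_inj (by omega)
        rw [h1, h2, Sym2.eq_swap]
  -- unit edge count
  have hUcard : U.card ≤ n - 1 := by
    have hmain : U.card ≤ (Finset.range (n - 1)).card := by
      apply Finset.card_le_card_of_injOn (fun e => elo p e)
      · intro e he
        rw [hU, Finset.mem_coe, Finset.mem_filter] at he
        have := hlohi e he.1
        simp only [Finset.mem_coe, Finset.mem_range]; omega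
      · intro e he e' he' hee
        rw [Finset.mem_coe, hU, Finset.mem_filter] at he he'
        have hee' : elo p e = elo p e' := hee
        have hpsymm : ∀ (m : ℕ) (h : m < n), p (β.symm ⟨m, h⟩) = m := fun m h => by simp [hp]
        have hb1 : elo p e < n := by have := hlohi e he.1; omega
        have hb2 : elo p e + 1 < n := by have := hlohi e he.1; omega
        have k1 := hunit_eq e he.1 he.2 (β.symm ⟨elo p e, hb1⟩) (β.symm ⟨elo p e + 1, hb2⟩)
          (hpsymm _ _) (by rw [hpsymm]; have := hlohi e he.1; omega)
        have k2 := hunit_eq e' he'.1 he'.2 (β.symm ⟨elo p e, hb1⟩) (β.symm ⟨elo p e + 1, hb2⟩)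
          (by rw [hpsymm]; omega) (by rw [hpsymm]; have := hlohi e' he'.1; omega)
        rw [k1, k2]
    simpa using hmain
  -- middle gaps
  set Mid : Finset ℕ := Finset.Ico k (n - 1 - k) with hMid
  set PA : ℕ → Prop := fun i => ∀ e ∈ E, elo p e ≤ i → i < ehi p e → ehi p e - elo p e = 1
    with hPA
  set A : Finset ℕ := Mid.filter PA with hA
  have hMid_sub : ∀ i ∈ Mid, k ≤ i ∧ i + k + 2 ≤ n := by
    intro i hi
    rw [hMid, Finset.mem_Ico] at hi
    omega
  -- characterization of A-gaps
  have hAcr : ∀ i ∈ A, ∀ (hx : i < n) (hv : i + 1 < n),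
      (∀ a b, G.Adj a b → p a ≤ i → i < p b → s(a, b) = s(β.symm ⟨i, hx⟩, β.symm ⟨i + 1, hv⟩)) ∧
        G.Adj (β.symm ⟨i, hx⟩) (β.symm ⟨i + 1, hv⟩) := by
    intro i hiA hx hv
    rw [hA, Finset.mem_filter] at hiA
    obtain ⟨hiMid, hPAi⟩ := hiA
    have hpxi : p (β.symm ⟨i, hx⟩) = i := by simp [hp]
    have hpvi : p (β.symm ⟨i + 1, hv⟩) = i + 1 := by simp [hp]
    have hcr : ∀ a b, G.Adj a b → p a ≤ i → i < p b →
        s(a, b) = s(β.symm ⟨i, hx⟩, β.symm ⟨i + 1, hv⟩) := by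
      intro a b hab ha hb2
      have hmem : s(a, b) ∈ E := (hmemE _).mpr hab
      have hcross1 : elo p s(a, b) ≤ i := by simp only [elo_mk]; omega
      have hcross2 : i < ehi p s(a, b) := by simp only [ehi_mk]; omega
      have hu := hPAi _ hmem hcross1 hcross2
      have hlo2 : elo p s(a, b) = i := by omega
      have hhi2 : ehi p s(a, b) = i + 1 := by omega
      exact hunit_eq _ hmem hu _ _ (by rw [hpxi, hlo2]) (by rw [hpvi, hhi2])
    refine ⟨hcr, ?_⟩
    obtain ⟨e, heE, he1, he2⟩ := hconn_cross i (by have := hMid_sub i hiMid; omega)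
    have hu := hPAi e heE he1 he2
    have hlo2 : elo p e = i := by have := hlohi e heE; omega
    have hhi2 : ehi p e = i + 1 := by have := hlohi e heE; omega
    have hee := hunit_eq e heE hu (β.symm ⟨i, hx⟩) (β.symm ⟨i + 1, hv⟩)
      (by rw [hpxi, hlo2]) (by rw [hpvi, hhi2])
    rw [hmemE, hee] at heE
    exact heE
  -- no two adjacent A gaps
  have hA_nonadj : ∀ i, i ∈ A → i + 1 ∈ A → False := by
    intro i hi hi1
    have hm := hMid_sub i (Finset.mem_filter.mp hi).1
    have hm1 := hMid_sub (i + 1) (Finset.mem_filter.mp hi1).1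
    have hx : i < n := by omega
    have hv : i + 1 < n := by omega
    have hz : i + 2 < n := by omega
    obtain ⟨hcr1, hadj1⟩ := hAcr i hi hx hv
    obtain ⟨hcr2, hadj2⟩ := hAcr (i + 1) hi1 hv hz
    set x := β.symm ⟨i, hx⟩ with hxdef
    set v := β.symm ⟨i + 1, hv⟩ with hvdef
    set z := β.symm ⟨i + 2, hz⟩ with hzdef
    have hpx : p x = i := by simp [hp, hxdef]
    have hpv : p v = i + 1 := by simp [hp, hvdef]
    have hpz : p z = i + 2 := by simp [hp, hzdef]
    apply hsupp v
    refine ⟨x, z, ?_, ?_, ?_, ?_, ?_⟩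
    · intro h
      rw [h] at hpx
      omega
    · ext w
      simp only [SimpleGraph.mem_neighborSet, Set.mem_insert_iff, Set.mem_singleton_iff]
      constructor
      · intro hw
        have hwv : p w ≠ i + 1 := by
          intro h
          exact hw.ne' (hp_inj (h.trans hpv.symm))
        rcases lt_or_gt_of_ne hwv with h | h
        · left
          have h5 := hcr1 w v hw.symm (by omega) (by omega)
          rw [Sym2.eq_iff] at h5
          rcases h5 with ⟨h1, _⟩ | ⟨_, h2⟩
          · exact h1
          · exfalso
            have := congrArg p h2
            rw [hpv, hpx] at this
            omega
        · right
          have h5 := hcr2 v w hw (by omega) (by omega)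
          rw [Sym2.eq_iff] at h5
          rcases h5 with ⟨_, h2⟩ | ⟨h1, _⟩
          · exact h2
          · exfalso
            have := congrArg p h1
            rw [hpv, hpz] at this
            omega
      · rintro (rfl | rfl)
        · exact hadj1.symm
        · exact hadj2
    · intro hxz
      have h5 := hcr1 x z hxz (by omega) (by omega)
      rw [Sym2.eq_iff] at h5
      rcases h5 with ⟨_, h2⟩ | ⟨h1, _⟩
      · have := congrArg p h2
        rw [hpz, hpv] at this
        omega
      · have := congrArg p h1
        rw [hpx, hpv] at this
        omega
    · exact ksep_symm _ _ (sep_bridge_of_gap β hG (by omega) (by omega) hpx hpv hadj1 hcr1)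
    · exact sep_bridge_of_gap β hG (by omega) (by omega) hpv hpz hadj2 hcr2
  -- non-A middle gaps are crossed by a long edge
  have hNonA_long : ∀ j ∈ Mid \ A, ∃ e ∈ L, elo p e ≤ j ∧ j < ehi p e := by
    intro j hj
    rw [Finset.mem_sdiff] at hj
    obtain ⟨hjM, hjA⟩ := hj
    have hnPA : ¬ (∀ e ∈ E, elo p e ≤ j → j < ehi p e → ehi p e - elo p e = 1) := by
      intro h
      exact hjA (by rw [hA, Finset.mem_filter]; exact ⟨hjM, h⟩)
    push_neg at hnPA
    obtain ⟨e, heE, h1, h2, h3⟩ := hnPA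
    exact ⟨e, by rw [hL, Finset.mem_filter]; exact ⟨heE, h3⟩, h1, h2⟩
  -- charging: A-gaps (except the last) map injectively into L
  set A' : Finset ℕ := A.filter (fun i => i + 1 < n - 1 - k) with hA'
  have hA'mid : ∀ i ∈ A', i + 1 ∈ Mid \ A := by
    intro i hi
    rw [hA', Finset.mem_filter] at hi
    obtain ⟨hiA, hlt⟩ := hi
    rw [Finset.mem_sdiff]
    constructor
    · have h6 := (Finset.mem_filter.mp hiA).1
      rw [hMid, Finset.mem_Ico] at h6 ⊢
      omega
    · intro h
      exact hA_nonadj i hiA h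
  have hcharge : ∀ i : ℕ, ∃ e : Sym2 V,
      i ∈ A' → e ∈ L ∧ elo p e ≤ i + 1 ∧ i + 1 < ehi p e := by
    intro i
    by_cases h : i ∈ A'
    · obtain ⟨e, h1, h2, h3⟩ := hNonA_long (i + 1) (hA'mid i h)
      exact ⟨e, fun _ => ⟨h1, h2, h3⟩⟩
    · exact ⟨s(Classical.arbitrary V, Classical.arbitrary V), fun h' => absurd h' h⟩
  set f : ℕ → Sym2 V := fun i => (hcharge i).choose with hf
  have hfspec : ∀ i ∈ A', f i ∈ L ∧ elo p (f i) ≤ i + 1 ∧ i + 1 < ehi p (f i) :=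
    fun i hi => (hcharge i).choose_spec hi
  have hhalf : ∀ i ∈ A', ∀ j ∈ A', i < j → f i = f j → False := by
    intro i hi j hj hij hfeq
    have hjA : j ∈ A := (Finset.mem_filter.mp hj).1
    have hPAj : PA j := (Finset.mem_filter.mp hjA).2
    obtain ⟨hiL, hi1, hi2⟩ := hfspec i hi
    obtain ⟨_, hj1, hj2⟩ := hfspec j hj
    have heE : f i ∈ E := hLsubE hiL
    have h7 := hPAj (f i) heE (by omega) (by rw [hfeq]; omega)
    rw [hL, Finset.mem_filter] at hiL
    exact hiL.2 h7
  have hA'card : A'.card ≤ L.card := by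
    apply Finset.card_le_card_of_injOn f (fun i hi => (hfspec i hi).1)
    intro i hi j hj hfeq
    rw [Finset.mem_coe] at hi hj
    by_contra hne
    rcases lt_or_gt_of_ne hne with h | h
    · exact hhalf i hi j hj h hfeq
    · exact hhalf j hj i hi h hfeq.symm
  have hAcard : A.card ≤ L.card + 1 := by
    have hsub : A ⊆ insert (n - 2 - k) A' := by
      intro i hi
      rw [Finset.mem_insert]
      by_cases h : i + 1 < n - 1 - k
      · right
        rw [hA', Finset.mem_filter]
        exact ⟨hi, h⟩
      · left
        have h6 := (Finset.mem_filter.mp hi).1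
        rw [hMid, Finset.mem_Ico] at h6
        omega
    calc A.card ≤ (insert (n - 2 - k) A').card := Finset.card_le_card hsub
    _ ≤ A'.card + 1 := Finset.card_insert_le _ _
    _ ≤ L.card + 1 := by omega
  have hNonAcard : (Mid \ A).card ≤ 2 * k := by
    have hsub : Mid \ A ⊆ L.biUnion (fun e => Finset.Ico (elo p e) (ehi p e)) := by
      intro j hj
      obtain ⟨e, heL, h1, h2⟩ := hNonA_long j hj
      rw [Finset.mem_biUnion]
      exact ⟨e, heL, Finset.mem_Ico.mpr ⟨h1, h2⟩⟩
    calc (Mid \ A).card ≤ (L.biUnion (fun e => Finset.Ico (elo p e) (ehi p e))).card :=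
          Finset.card_le_card hsub
    _ ≤ ∑ e ∈ L, (Finset.Ico (elo p e) (ehi p e)).card := Finset.card_biUnion_le
    _ = ∑ e ∈ L, (ehi p e - elo p e) := by simp [Nat.card_Ico]
    _ ≤ 2 * k := hLlen
  have hMidsplit : (Mid \ A).card + A.card = Mid.card := by
    have h8 := Finset.card_sdiff_add_card_eq_card (Finset.filter_subset PA Mid)
    rw [← hA] at h8
    exact h8
  have hMidcard : Mid.card = n - 1 - k - k := by
    rw [hMid, Nat.card_Ico]
  have hn_bound : n ≤ 5 * k + 2 := by omega
  refine ⟨hn_bound, ?_⟩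
  have hEnat : Nat.card G.edgeSet = E.card := by
    rw [Nat.card_coe_set_eq, Set.ncard_eq_toFinset_card _ hEfin]
  omega

theorem kernel_size {V : Type*} [Finite V] (G : SimpleGraph V) (hconn : G.Connected)
    (k : ℕ) (hk : 1 ≤ k) (hsupp : ∀ v : V, ¬ IsKSuppressible G k v)
    (hola : olaPlus G ≤ k) :
    Nat.card V ≤ 5 * k + 2 ∧ Nat.card G.edgeSet ≤ 6 * k + 1 := by
  classical
  have hne : {c : ℕ | ∃ α : V ≃ Fin (Nat.card V), netCost G (arr α) = c}.Nonempty := by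
    have hne2 : Nonempty (V ≃ Fin (Nat.card V)) := by
      haveI := Fintype.ofFinite V
      exact ⟨(Fintype.equivFin V).trans (finCongr Nat.card_eq_fintype_card.symm)⟩
    obtain ⟨α⟩ := hne2
    exact ⟨netCost G (arr α), α, rfl⟩
  obtain ⟨β, hβ⟩ := Nat.sInf_mem hne
  have hcost : netCost G (fun v => (β v : ℕ) + 1) ≤ k := by
    rw [show (fun v => (β v : ℕ) + 1) = arr β from rfl, hβ]
    exact hola
  exact key_bound G β hconn k hk hsupp hcost
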